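/- For every $w \in S_+$, the Schubert cancellation identity holds: $\sum_{(u,v)} (-1)^{\ell(u)} \mathfrak{S}_{u^{-1}}(a) \mathfrak{S}_v(a) = \delta_{w, \mathrm{id}}$, where the sum is over all pairs $(u,v)$ with $w = uv$ and $\ell(w) = \ell(u) + \ell(v)$, and both Schubert polynomials are evaluated in the same variable set $a$. -/

import Mathlib

/-!
Write `G f g w = ∑_{w ≐ uv} (-1)^{ℓ(u)} f(u⁻¹) g(v)` and induct on `ℓ(w)`. Since
`sᵢ 𝔖_x = 𝔖_x - (aᵢ - aᵢ₊₁) ∂ᵢ𝔖_x`, applying `sᵢ` to `G 𝔖 𝔖 w` leaves `G 𝔖 𝔖 w` plus multiples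
of `G (∂ᵢ𝔖) 𝔖 w`, `G 𝔖 (∂ᵢ𝔖) w` and `G (∂ᵢ𝔖) (∂ᵢ𝔖) w`. The bijections `(u, v) ↦ (sᵢu, v)` and
`(u, v) ↦ (u, vsᵢ)` turn these into `-G 𝔖 𝔖 (sᵢw)`, `G 𝔖 𝔖 (wsᵢ)` and `-G 𝔖 𝔖 (sᵢwsᵢ)`, which
vanish by induction except when `w = sᵢ`, where the first two cancel. So for `w ≠ 1` the sum is
a homogeneous polynomial of positive degree `ℓ(w)` fixed by every `sᵢ`; as it involves only
finitely many variables, it is zero.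
-/

open MvPolynomial

/-- The group `S₊` of permutations of `ℕ` moving only finitely many elements
(the positive integers are relabeled `0, 1, 2, …`). -/
def SPlus : Subgroup (Equiv.Perm ℕ) where
  carrier := {w | {i : ℕ | w i ≠ i}.Finite}
  one_mem' := by
    have h : {i : ℕ | (1 : Equiv.Perm ℕ) i ≠ i} = ∅ := by ext i; simp
    show ({i : ℕ | (1 : Equiv.Perm ℕ) i ≠ i}).Finite
    rw [h]; exact Set.finite_empty
  mul_mem' := by
    intro a b ha hb
    show ({i : ℕ | (a * b) i ≠ i}).Finite
    refine (Set.Finite.union ha hb).subset ?_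
    intro j hj
    simp only [Set.mem_setOf_eq] at hj
    by_contra hc
    simp only [Set.mem_union, Set.mem_setOf_eq, not_or, not_not] at hc
    exact hj (by rw [Equiv.Perm.mul_apply, hc.2, hc.1])
  inv_mem' := by
    intro a ha
    show ({i : ℕ | a⁻¹ i ≠ i}).Finite
    have h : {i : ℕ | a⁻¹ i ≠ i} = {i : ℕ | a i ≠ i} := by
      ext i
      simp only [Set.mem_setOf_eq, ne_eq, Equiv.Perm.inv_eq_iff_eq]
      exact not_congr eq_comm
    rw [h]; exact ha

/-- The simple transposition `s_i = (i, i+1)` as an element of `S₊`. -/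
def sN (i : ℕ) : SPlus :=
  ⟨Equiv.swap i (i + 1), by
    show ({j : ℕ | Equiv.swap i (i + 1) j ≠ j}).Finite
    refine ((Set.finite_singleton (i + 1)).insert i).subset ?_
    intro j hj
    simp only [Set.mem_setOf_eq] at hj
    by_contra hc
    simp only [Set.mem_insert_iff, Set.mem_singleton_iff, not_or] at hc
    exact hj (Equiv.swap_apply_of_ne_of_ne hc.1 hc.2)⟩

/-- Coxeter length = number of inversions. -/
noncomputable def lenS (w : SPlus) : ℕ :=
  Nat.card {p : ℕ × ℕ | p.1 < p.2 ∧ (w : Equiv.Perm ℕ) p.2 < (w : Equiv.Perm ℕ) p.1}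

/-- The defining properties of the family of Schubert polynomials `𝔖_w`, `w ∈ S₊`:
`𝔖_id = 1`; `𝔖_w` is homogeneous of degree `ℓ(w)`; and
`A_i 𝔖_w = 𝔖_{w sᵢ}` if `ℓ(w sᵢ) < ℓ(w)` and `A_i 𝔖_w = 0` otherwise, where the
divided difference relations are expressed via
`(x_i - x_{i+1}) 𝔖_{w sᵢ} = 𝔖_w - s_i 𝔖_w` resp. `s_i 𝔖_w = 𝔖_w`. -/
def SchubertFamily (S : SPlus → MvPolynomial ℕ ℚ) : Prop :=
  S 1 = 1 ∧
  (∀ w : SPlus, (S w).IsHomogeneous (lenS w)) ∧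
  (∀ (w : SPlus) (i : ℕ),
    if lenS (w * sN i) < lenS w then
      (X i - X (i + 1)) * S (w * sN i)
        = S w - rename (fun j => Equiv.swap i (i + 1) j) (S w)
    else rename (fun j => Equiv.swap i (i + 1) j) (S w) = S w)

open Equiv

lemma sN_mul_self (i : ℕ) : sN i * sN i = 1 :=
  Subtype.ext (swap_mul_self i (i + 1))

lemma sN_inv (i : ℕ) : (sN i)⁻¹ = sN i :=
  inv_eq_of_mul_eq_one_right (sN_mul_self i)

def inversions (w : Perm ℕ) : Set (ℕ × ℕ) := {p | p.1 < p.2 ∧ w p.2 < w p.1}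

lemma lenS_eq_ncard (w : SPlus) : lenS w = (inversions w).ncard :=
  Nat.card_coe_set_eq _

lemma mem_fixingSubgroup_Ioi {w : SPlus} {B : ℕ} :
    w ∈ fixingSubgroup SPlus (Set.Ioi B) ↔ ∀ j, B < j → (w : Perm ℕ) j = j := by
  simp [mem_fixingSubgroup_iff, Subgroup.smul_def, Perm.smul_def]

lemma exists_mem_fixingSubgroup_Ioi (w : SPlus) :
    ∃ B : ℕ, w ∈ fixingSubgroup SPlus (Set.Ioi B) := by
  obtain ⟨B, hB⟩ := (w.2 : {i | (w : Perm ℕ) i ≠ i}.Finite).bddAbove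
  refine ⟨B, mem_fixingSubgroup_Ioi.2 fun j hj => ?_⟩
  by_contra h
  exact (hB h).not_gt hj

lemma apply_le_of_mem_fixingSubgroup_Ioi {w : SPlus} {B j : ℕ}
    (hw : w ∈ fixingSubgroup SPlus (Set.Ioi B)) (hj : j ≤ B) : (w : Perm ℕ) j ≤ B := by
  by_contra h
  have := (w : Perm ℕ).injective (mem_fixingSubgroup_Ioi.1 hw _ (not_le.1 h))
  omega

lemma inversions_subset_of_mem_fixingSubgroup_Ioi {w : SPlus} {B : ℕ}
    (hw : w ∈ fixingSubgroup SPlus (Set.Ioi B)) :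
    inversions w ⊆ Set.Iic B ×ˢ Set.Iic B := by
  rintro ⟨a, b⟩ ⟨hab, hba : (w : Perm ℕ) b < (w : Perm ℕ) a⟩
  have hfix := mem_fixingSubgroup_Ioi.1 hw
  have hb : b ≤ B := by
    by_contra hb
    rw [hfix b (by omega)] at hba
    by_cases ha : a ≤ B
    · have := apply_le_of_mem_fixingSubgroup_Ioi hw ha
      omega
    · rw [hfix a (by omega)] at hba
      omega
  simp only [Set.mem_prod, Set.mem_Iic]
  omega

lemma inversions_finite (w : SPlus) : (inversions w).Finite := by
  obtain ⟨B, hB⟩ := exists_mem_fixingSubgroup_Ioi w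
  exact ((Set.finite_Iic B).prod (Set.finite_Iic B)).subset
    (inversions_subset_of_mem_fixingSubgroup_Ioi hB)

lemma inversions_mul_swap {w : Perm ℕ} {i : ℕ} (h : w i < w (i + 1)) :
    inversions (w * swap i (i + 1)) =
      insert (i, i + 1) (Prod.map (swap i (i + 1)) (swap i (i + 1)) '' inversions w) := by
  ext ⟨a, b⟩
  simp only [inversions, Set.mem_insert_iff, Set.mem_image, Set.mem_ofPred_eq, Prod.exists,
    Prod.map, Prod.mk.injEq, Perm.mul_apply]
  constructor
  · rintro ⟨hab, hba⟩
    by_cases hi : a = i ∧ b = i + 1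
    · exact Or.inl hi
    · refine Or.inr ⟨swap i (i + 1) a, swap i (i + 1) b, ⟨?_, hba⟩, by simp⟩
      rw [swap_apply_def, swap_apply_def]
      split_ifs <;> omega
  · rintro (⟨rfl, rfl⟩ | ⟨c, d, ⟨hcd, hdc⟩, rfl, rfl⟩)
    · simpa using h
    · refine ⟨?_, by simpa using hdc⟩
      have hne : ¬(c = i ∧ d = i + 1) := by
        rintro ⟨rfl, rfl⟩
        exact hdc.not_gt h
      rw [swap_apply_def, swap_apply_def]
      split_ifs <;> omega

lemma lenS_mul_sN_of_lt {w : SPlus} {i : ℕ} (h : (w : Perm ℕ) i < (w : Perm ℕ) (i + 1)) :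
    lenS (w * sN i) = lenS w + 1 := by
  have hinj : Function.Injective (Prod.map (swap i (i + 1)) (swap i (i + 1))) :=
    (swap i (i + 1)).injective.prodMap (swap i (i + 1)).injective
  have hnotMem : (i, i + 1) ∉ Prod.map (swap i (i + 1)) (swap i (i + 1)) '' inversions w := by
    rintro ⟨⟨c, d⟩, ⟨hcd, -⟩, he⟩
    simp only [Prod.map, Prod.mk.injEq, swap_apply_eq_iff, swap_apply_left, swap_apply_right] at he
    omega
  rw [lenS_eq_ncard, lenS_eq_ncard]
  change (inversions ((w : Perm ℕ) * swap i (i + 1))).ncard = _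
  rw [inversions_mul_swap h, Set.ncard_insert_of_notMem hnotMem ((inversions_finite w).image _),
    Set.ncard_image_of_injective _ hinj]

lemma lenS_mul_sN_of_gt {w : SPlus} {i : ℕ} (h : (w : Perm ℕ) (i + 1) < (w : Perm ℕ) i) :
    lenS (w * sN i) + 1 = lenS w := by
  have := lenS_mul_sN_of_lt (w := w * sN i) (i := i) (by simpa [sN] using h)
  rwa [mul_assoc, sN_mul_self, mul_one, eq_comm] at this

lemma lenS_mul_sN_eq_or (w : SPlus) (i : ℕ) :
    lenS (w * sN i) = lenS w + 1 ∨ lenS (w * sN i) + 1 = lenS w := by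
  rcases lt_or_gt_of_ne ((w : Perm ℕ).injective.ne (Nat.succ_ne_self i).symm) with h | h
  · exact Or.inl (lenS_mul_sN_of_lt h)
  · exact Or.inr (lenS_mul_sN_of_gt h)

lemma lenS_mul_sN_lt_iff {w : SPlus} {i : ℕ} :
    lenS (w * sN i) < lenS w ↔ (w : Perm ℕ) (i + 1) < (w : Perm ℕ) i := by
  refine ⟨fun hlt => ?_, fun h => by have := lenS_mul_sN_of_gt h; omega⟩
  by_contra h
  have := lenS_mul_sN_of_lt (lt_of_le_of_ne (not_lt.1 h) ((w : Perm ℕ).injective.ne (by omega)))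
  omega

lemma lenS_one : lenS 1 = 0 := by
  rw [lenS_eq_ncard, Set.ncard_eq_zero (inversions_finite 1)]
  ext ⟨a, b⟩
  simp only [inversions, OneMemClass.coe_one, Perm.coe_one, id, Set.mem_ofPred_eq,
    Set.mem_empty_iff_false, iff_false]
  omega

lemma lenS_sN (i : ℕ) : lenS (sN i) = 1 := by
  simpa [lenS_one] using lenS_mul_sN_of_lt (w := 1) (i := i) (by simp)

lemma lenS_inv (w : SPlus) : lenS w⁻¹ = lenS w := by
  rw [lenS_eq_ncard, lenS_eq_ncard]
  have hinj : Function.Injective fun p : ℕ × ℕ => ((w : Perm ℕ) p.2, (w : Perm ℕ) p.1) :=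
    fun p q hpq => by
      simp only [Prod.mk.injEq, EmbeddingLike.apply_eq_iff_eq] at hpq
      exact Prod.ext hpq.2 hpq.1
  rw [← Set.ncard_image_of_injective (inversions w) hinj]
  congr 1
  ext ⟨a, b⟩
  simp only [inversions, InvMemClass.coe_inv, Set.mem_ofPred_eq, Set.mem_image, Prod.exists,
    Prod.mk.injEq]
  constructor
  · rintro ⟨hab, hba⟩
    exact ⟨_, _, ⟨hba, by simpa using hab⟩, by simp, by simp⟩
  · rintro ⟨c, d, ⟨hcd, hdc⟩, rfl, rfl⟩
    exact ⟨hdc, by simpa using hcd⟩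

lemma exists_lenS_mul_sN_add_one_eq {w : SPlus} (hw : w ≠ 1) :
    ∃ i, lenS (w * sN i) + 1 = lenS w := by
  by_contra! hasc
  have hmono : StrictMono (w : Perm ℕ) := strictMono_nat_of_lt_succ fun i => by
    rcases lenS_mul_sN_eq_or w i with h | h
    · exact not_le.1 fun hle => (hasc i) (lenS_mul_sN_of_gt
        (lt_of_le_of_ne hle ((w : Perm ℕ).injective.ne (by omega))))
    · exact absurd h (hasc i)
  have := Subsingleton.elim (hmono.orderIsoOfSurjective _ (w : Perm ℕ).surjective)
    (OrderIso.refl ℕ)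
  exact hw (Subtype.ext (Equiv.ext fun j => DFunLike.congr_fun this j))

lemma lenS_pos {w : SPlus} (hw : w ≠ 1) : 0 < lenS w := by
  obtain ⟨i, hi⟩ := exists_lenS_mul_sN_add_one_eq hw
  omega

lemma lenS_mul_le (u v : SPlus) : lenS (u * v) ≤ lenS u + lenS v := by
  generalize hn : lenS v = n
  induction n using Nat.strong_induction_on generalizing v with
  | _ n ih =>
    by_cases hv : v = 1
    · simp [hv]
    obtain ⟨i, hi⟩ := exists_lenS_mul_sN_add_one_eq hv
    have hsplit : u * v = u * (v * sN i) * sN i := by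
      rw [mul_assoc, mul_assoc, sN_mul_self, mul_one]
    have := ih _ (by omega) (v * sN i) rfl
    rw [hsplit]
    rcases lenS_mul_sN_eq_or (u * (v * sN i)) i with h | h <;> omega

lemma lenS_sN_mul (w : SPlus) (i : ℕ) : lenS (sN i * w) = lenS (w⁻¹ * sN i) := by
  rw [← lenS_inv, mul_inv_rev, sN_inv]

section Factorizations

def factorizations (w : SPlus) : Set (SPlus × SPlus) :=
  {p | w = p.1 * p.2 ∧ lenS w = lenS p.1 + lenS p.2}

lemma factorizations_one : factorizations 1 = {(1, 1)} := by
  ext ⟨u, v⟩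
  simp only [factorizations, lenS_one, Set.mem_ofPred_eq, Set.mem_singleton_iff, Prod.mk.injEq]
  constructor
  · rintro ⟨-, hlen⟩
    by_contra h
    rcases not_and_or.1 h with hu | hv
    · have := lenS_pos hu; omega
    · have := lenS_pos hv; omega
  · rintro ⟨rfl, rfl⟩
    simp [lenS_one]

variable {w x y : SPlus} {p : SPlus × SPlus}

lemma lenS_mul_mul_of_mem_factorizations (hp : p ∈ factorizations w)
    (hx : lenS (x * p.1) + lenS x = lenS p.1) (hy : lenS (p.2 * y) + lenS y = lenS p.2) :
    lenS (x * w * y) + lenS x + lenS y = lenS w := by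
  have hle : lenS (x * w * y) ≤ lenS (x * p.1) + lenS (p.2 * y) := by
    have hsplit : x * w * y = x * p.1 * (p.2 * y) := by rw [hp.1]; group
    exact hsplit ▸ lenS_mul_le _ _
  have hge : lenS w ≤ lenS x + lenS (x * w * y) + lenS y := by
    calc lenS w = lenS (x⁻¹ * (x * w * y) * y⁻¹) := by group
      _ ≤ lenS x + lenS (x * w * y) + lenS y := by
        have := lenS_mul_le (x⁻¹ * (x * w * y)) y⁻¹
        have := lenS_mul_le x⁻¹ (x * w * y)
        rw [lenS_inv] at *
        omega
  have := hp.2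
  omega

lemma mul_mul_mem_factorizations (hp : p ∈ factorizations w)
    (hx : lenS (x * p.1) + lenS x = lenS p.1) (hy : lenS (p.2 * y) + lenS y = lenS p.2) :
    (x * p.1, p.2 * y) ∈ factorizations (x * w * y) := by
  have := lenS_mul_mul_of_mem_factorizations hp hx hy
  refine ⟨by rw [hp.1]; group, ?_⟩
  have := hp.2
  dsimp only
  omega

lemma bijOn_mul_mul_factorizations (h : lenS (x * w * y) + lenS x + lenS y = lenS w) :
    Set.BijOn (fun p => (x * p.1, p.2 * y))
      {p ∈ factorizations w | lenS (x * p.1) + lenS x = lenS p.1 ∧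
        lenS (p.2 * y) + lenS y = lenS p.2}
      (factorizations (x * w * y)) := by
  refine ⟨fun p hp => mul_mul_mem_factorizations hp.1 hp.2.1 hp.2.2, ?_, ?_⟩
  · rintro ⟨u, v⟩ - ⟨u', v'⟩ - huv
    simp only [Prod.mk.injEq, mul_left_cancel_iff, mul_right_cancel_iff] at huv
    rw [huv.1, huv.2]
  · rintro ⟨u, v⟩ ⟨huv : x * w * y = u * v, hlen : lenS (x * w * y) = lenS u + lenS v⟩
    have hw : w = x⁻¹ * u * (v * y⁻¹) := by
      rw [mul_assoc, ← mul_assoc u, ← huv]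
      group
    have h₁ := lenS_mul_le x⁻¹ u
    have h₂ := lenS_mul_le v y⁻¹
    have h₃ := lenS_mul_le (x⁻¹ * u) (v * y⁻¹)
    rw [← hw] at h₃
    rw [lenS_inv] at h₁ h₂
    refine ⟨(x⁻¹ * u, v * y⁻¹), ⟨⟨hw, ?_⟩, ?_, ?_⟩, ?_⟩
    · dsimp only
      omega
    · simp only [mul_inv_cancel_left]
      omega
    · simp only [inv_mul_cancel_right]
      omega
    · simp

lemma finsum_factorizations_mul_mul {M : Type*} [AddCommMonoid M] (F : SPlus × SPlus → M)
    (x y w : SPlus) :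
    ∑ᶠ p ∈ {p ∈ factorizations w | lenS (x * p.1) + lenS x = lenS p.1 ∧
        lenS (p.2 * y) + lenS y = lenS p.2}, F (x * p.1, p.2 * y) =
      if lenS (x * w * y) + lenS x + lenS y = lenS w then
        ∑ᶠ q ∈ factorizations (x * w * y), F q
      else 0 := by
  split_ifs with h
  · exact finsum_mem_eq_of_bijOn _ (bijOn_mul_mul_factorizations h) fun _ _ => rfl
  · exact finsum_mem_of_eqOn_zero fun p hp =>
      absurd (lenS_mul_mul_of_mem_factorizations hp.1 hp.2.1 hp.2.2) h

end Factorizations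

section Finiteness

variable {B : ℕ}

lemma finite_fixingSubgroup_Ioi (B : ℕ) :
    (fixingSubgroup SPlus (Set.Ioi B) : Set SPlus).Finite := by
  have : Finite {f : Perm ℕ // ∀ a, ¬a ≤ B → f a = a} :=
    Finite.of_equiv _ (Perm.subtypeEquivSubtypePerm (· ≤ B))
  refine Set.finite_coe_iff.1 (Finite.of_injective
    (fun w : fixingSubgroup SPlus (Set.Ioi B) =>
      (⟨(w : SPlus), fun a ha => mem_fixingSubgroup_Ioi.1 w.2 a (not_le.1 ha)⟩ :
        {f : Perm ℕ // ∀ a, ¬a ≤ B → f a = a})) fun v w hvw => ?_)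
  simp only [Subtype.mk.injEq] at hvw
  exact Subtype.ext (Subtype.ext hvw)

lemma lt_of_mem_fixingSubgroup_Ioi_of_lenS_mul_sN_lt {w : SPlus} {i : ℕ}
    (hw : w ∈ fixingSubgroup SPlus (Set.Ioi B)) (h : lenS (w * sN i) < lenS w) : i < B := by
  rw [lenS_mul_sN_lt_iff] at h
  have hfix := mem_fixingSubgroup_Ioi.1 hw
  by_contra hi
  rw [hfix (i + 1) (by omega)] at h
  have := (w : Perm ℕ).injective (hfix ((w : Perm ℕ) i) (by omega))
  omega

lemma sN_mem_fixingSubgroup_Ioi {i : ℕ} (hi : i < B) :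
    sN i ∈ fixingSubgroup SPlus (Set.Ioi B) :=
  mem_fixingSubgroup_Ioi.2 fun j hj => swap_apply_of_ne_of_ne (by omega) (by omega)

lemma snd_mem_fixingSubgroup_Ioi {w : SPlus} {p : SPlus × SPlus} (hp : p ∈ factorizations w)
    (hw : w ∈ fixingSubgroup SPlus (Set.Ioi B)) : p.2 ∈ fixingSubgroup SPlus (Set.Ioi B) := by
  generalize hn : lenS p.2 = n
  induction n using Nat.strong_induction_on generalizing p w with
  | _ n ih =>
    by_cases hp₂ : p.2 = 1
    · rw [hp₂]
      exact one_mem _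
    obtain ⟨i, hi⟩ := exists_lenS_mul_sN_add_one_eq hp₂
    have hx : lenS (1 * p.1) + lenS 1 = lenS p.1 := by simp [lenS_one]
    have hy : lenS (p.2 * sN i) + lenS (sN i) = lenS p.2 := by rwa [lenS_sN]
    have hdesc := lenS_mul_mul_of_mem_factorizations hp hx hy
    rw [one_mul, lenS_one, lenS_sN] at hdesc
    have hsN := sN_mem_fixingSubgroup_Ioi
      (lt_of_mem_fixingSubgroup_Ioi_of_lenS_mul_sN_lt (i := i) hw (by omega))
    have hmem := mul_mul_mem_factorizations hp hx hy
    rw [one_mul] at hmem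
    have := ih (lenS (p.2 * sN i)) (by omega) hmem (mul_mem hw hsN) rfl
    simpa [mul_assoc, sN_mul_self] using mul_mem this hsN

lemma factorizations_finite (w : SPlus) : (factorizations w).Finite := by
  obtain ⟨B, hB⟩ := exists_mem_fixingSubgroup_Ioi w
  refine ((finite_fixingSubgroup_Ioi B).prod (finite_fixingSubgroup_Ioi B)).subset
    fun p hp => ⟨?_, snd_mem_fixingSubgroup_Ioi hp hB⟩
  have : p.1 = w * p.2⁻¹ := by rw [hp.1, mul_inv_cancel_right]
  exact this ▸ mul_mem hB (inv_mem (snd_mem_fixingSubgroup_Ioi hp hB))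

end Finiteness

lemma finsum_mem_ite_zero {α M : Type*} [AddCommMonoid M] (s : Set α) (P : α → Prop)
    [DecidablePred P] (f : α → M) :
    ∑ᶠ a ∈ s, (if P a then f a else 0) = ∑ᶠ a ∈ {a ∈ s | P a}, f a := by
  refine (finsum_mem_inter_support_eq _ _ _ ?_).trans
    (finsum_mem_congr rfl fun a ha => if_pos ha.2)
  ext a
  by_cases h : P a <;> simp [h]

section CancellationSum

variable {R : Type*} [CommRing R]

noncomputable def cancellationSum (f g : SPlus → R) (w : SPlus) : R :=
  ∑ᶠ p ∈ factorizations w, (-1) ^ lenS p.1 * f p.1⁻¹ * g p.2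

/-- On a Schubert family `S`, `descentShift i S w = ∂ᵢ 𝔖_w`. -/
noncomputable def descentShift (i : ℕ) (f : SPlus → R) (w : SPlus) : R :=
  if lenS (w * sN i) < lenS w then f (w * sN i) else 0

lemma cancellationSum_one (f g : SPlus → R) : cancellationSum f g 1 = f 1 * g 1 := by
  simp [cancellationSum, factorizations_one, lenS_one]

lemma map_cancellationSum {R' : Type*} [CommRing R'] (φ : R →+* R') (f g : SPlus → R)
    (w : SPlus) : φ (cancellationSum f g w) = cancellationSum (φ ∘ f) (φ ∘ g) w := by
  simpa [cancellationSum] using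
    φ.toAddMonoidHom.map_finsum_mem (fun p => (-1) ^ lenS p.1 * f p.1⁻¹ * g p.2)
      (factorizations_finite w)

lemma cancellationSum_sub_mul (f f' g g' : SPlus → R) (c : R) (w : SPlus) :
    cancellationSum (fun x => f x - c * f' x) (fun x => g x - c * g' x) w =
      cancellationSum f g w - c * (cancellationSum f' g w + cancellationSum f g' w) +
        c ^ 2 * cancellationSum f' g' w := by
  simp only [cancellationSum, finsum_mem_eq_finite_toFinset_sum _ (factorizations_finite w),
    Finset.mul_sum, ← Finset.sum_add_distrib, ← Finset.sum_sub_distrib]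
  exact Finset.sum_congr rfl fun p _ => by ring

lemma cancellationSum_descentShift_left (i : ℕ) (f g : SPlus → R) (w : SPlus) :
    cancellationSum (descentShift i f) g w =
      if lenS (sN i * w) + 1 = lenS w then -cancellationSum f g (sN i * w) else 0 := by
  have hshift := finsum_factorizations_mul_mul
    (fun q => -((-1) ^ lenS q.1 * f q.1⁻¹ * g q.2 : R)) (sN i) 1 w
  simp only [mul_one, lenS_one, add_zero, and_true, lenS_sN] at hshift
  unfold cancellationSum
  rw [← finsum_mem_neg_distrib _ (factorizations_finite _), ← hshift, ← finsum_mem_ite_zero]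
  refine finsum_mem_congr rfl fun p _ => ?_
  have hcond : lenS (p.1⁻¹ * sN i) < lenS p.1⁻¹ ↔ lenS (sN i * p.1) + 1 = lenS p.1 := by
    rw [lenS_sN_mul, ← lenS_inv p.1]
    rcases lenS_mul_sN_eq_or p.1⁻¹ i with h | h <;> omega
  simp only [descentShift, hcond, mul_ite, ite_mul, mul_zero, zero_mul]
  split_ifs with h
  · rw [mul_inv_rev, sN_inv, ← h, pow_succ]
    ring
  · rfl

lemma cancellationSum_descentShift_right (i : ℕ) (f g : SPlus → R) (w : SPlus) :
    cancellationSum f (descentShift i g) w =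
      if lenS (w * sN i) + 1 = lenS w then cancellationSum f g (w * sN i) else 0 := by
  have hshift := finsum_factorizations_mul_mul
    (fun q => ((-1) ^ lenS q.1 * f q.1⁻¹ * g q.2 : R)) 1 (sN i) w
  simp only [one_mul, lenS_one, add_zero, true_and, lenS_sN] at hshift
  unfold cancellationSum
  rw [← hshift, ← finsum_mem_ite_zero]
  refine finsum_mem_congr rfl fun p _ => ?_
  have hcond : lenS (p.2 * sN i) < lenS p.2 ↔ lenS (p.2 * sN i) + 1 = lenS p.2 := by
    rcases lenS_mul_sN_eq_or p.2 i with h | h <;> omega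
  simp only [descentShift, hcond, mul_ite, mul_zero]

lemma isHomogeneous_cancellationSum {σ : Type*} {f g : SPlus → MvPolynomial σ R}
    (hf : ∀ w, (f w).IsHomogeneous (lenS w)) (hg : ∀ w, (g w).IsHomogeneous (lenS w))
    (w : SPlus) : (cancellationSum f g w).IsHomogeneous (lenS w) := by
  refine finsum_mem_induction (fun φ : MvPolynomial σ R => φ.IsHomogeneous (lenS w))
    (isHomogeneous_zero _ _ _) (fun _ _ => IsHomogeneous.add) fun p hp => ?_
  have hsign : ((-1) ^ lenS p.1 : MvPolynomial σ R) = C ((-1) ^ lenS p.1) := by simp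
  rw [hsign, hp.2, ← zero_add (lenS p.1), ← lenS_inv]
  exact ((isHomogeneous_C _ _).mul (hf _)).mul (hg _)

end CancellationSum

section Symmetric

variable {R : Type*} [CommSemiring R] {P : MvPolynomial ℕ R}

lemma vars_eq_empty_of_forall_rename_swap (h : ∀ i, rename (swap i (i + 1)) P = P) :
    P.vars = ∅ := by
  by_contra hne
  have hne' := Finset.nonempty_iff_ne_empty.2 hne
  set k := P.vars.max' hne'
  have hk : k ∈ (rename (swap k (k + 1)) P).vars := by
    rw [h]
    exact P.vars.max'_mem hne'
  obtain ⟨j, hj, hjk⟩ := mem_vars_rename _ _ hk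
  rw [swap_apply_eq_iff, swap_apply_left] at hjk
  have := P.vars.le_max' j hj
  omega

lemma eq_zero_of_isHomogeneous_of_forall_rename_swap {n : ℕ} (hP : P.IsHomogeneous n)
    (hn : n ≠ 0) (h : ∀ i, rename (swap i (i + 1)) P = P) : P = 0 := by
  rw [vars_eq_empty_iff_eq_C.1 (vars_eq_empty_of_forall_rename_swap h),
    hP.coeff_eq_zero (by simpa using hn.symm), C_0]

end Symmetric

lemma SchubertFamily.rename_swap {S : SPlus → MvPolynomial ℕ ℚ} (hS : SchubertFamily S)
    (w : SPlus) (i : ℕ) :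
    rename (swap i (i + 1)) (S w) = S w - (X i - X (i + 1)) * descentShift i S w := by
  have h : if lenS (w * sN i) < lenS w then
      (X i - X (i + 1)) * S (w * sN i) = S w - rename (swap i (i + 1)) (S w)
    else rename (swap i (i + 1)) (S w) = S w := hS.2.2 w i
  unfold descentShift
  split_ifs at h ⊢
  · linear_combination h
  · rw [h, mul_zero, sub_zero]

lemma rename_swap_cancellationSum {S : SPlus → MvPolynomial ℕ ℚ} (hS : SchubertFamily S)
    {w : SPlus} (hw : w ≠ 1)
    (ih : ∀ x, lenS x < lenS w → x ≠ 1 → cancellationSum S S x = 0) (i : ℕ) :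
    rename (swap i (i + 1)) (cancellationSum S S w) = cancellationSum S S w := by
  have hmap := map_cancellationSum (rename (swap i (i + 1))).toRingHom S S w
  have hrename : (rename (swap i (i + 1))).toRingHom ∘ S =
      fun x => S x - (X i - X (i + 1)) * descentShift i S x := funext (hS.rename_swap · i)
  rw [hrename, cancellationSum_sub_mul] at hmap
  have hlinear : cancellationSum (descentShift i S) S w +
      cancellationSum S (descentShift i S) w = 0 := by
    rw [cancellationSum_descentShift_left, cancellationSum_descentShift_right]
    by_cases hwi : w = sN i
    · subst hwi
      simp [sN_mul_self, lenS_one, lenS_sN, cancellationSum_one, hS.1]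
    have h₁ : sN i * w ≠ 1 := fun h => hwi (by rw [eq_inv_of_mul_eq_one_right h, sN_inv])
    have h₂ : w * sN i ≠ 1 := fun h => hwi (by rw [eq_inv_of_mul_eq_one_left h, sN_inv])
    rw [ite_eq_right_iff.2 fun _ => by rw [ih _ (by omega) h₁, neg_zero],
      ite_eq_right_iff.2 fun _ => ih _ (by omega) h₂, add_zero]
  have hquadratic : cancellationSum (descentShift i S) (descentShift i S) w = 0 := by
    rw [cancellationSum_descentShift_left, cancellationSum_descentShift_right]
    have h : sN i * w * sN i ≠ 1 := fun h => by
      rw [mul_assoc] at h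
      have hws := eq_inv_of_mul_eq_one_right h
      rw [sN_inv, mul_eq_right] at hws
      exact hw hws
    exact ite_eq_right_iff.2 fun _ => by
      rw [ite_eq_right_iff.2 fun _ => ih _ (by omega) h, neg_zero]
  rw [hlinear, hquadratic, mul_zero, sub_zero, mul_zero, add_zero] at hmap
  exact hmap

open Classical in
/-- The Schubert cancellation identity: for `w ∈ S₊`,
`∑_{w ≐ uv} (-1)^{ℓ(u)} 𝔖_{u⁻¹}(a) 𝔖_v(a) = δ_{w,id}`, where the sum is over
length-additive factorizations `w = u v` and both Schubert polynomials are in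
the same variables. -/
theorem schubert_cancellation
    (S : SPlus → MvPolynomial ℕ ℚ) (hS : SchubertFamily S) (w : SPlus) :
    (∑ᶠ p ∈ {p : SPlus × SPlus | w = p.1 * p.2 ∧ lenS w = lenS p.1 + lenS p.2},
        (-1 : MvPolynomial ℕ ℚ) ^ lenS p.1 * S p.1⁻¹ * S p.2)
      = if w = 1 then 1 else 0 := by
  change cancellationSum S S w = _
  generalize hn : lenS w = n
  induction n using Nat.strong_induction_on generalizing w with
  | _ n ih =>
    by_cases hw : w = 1
    · simp [hw, cancellationSum_one, hS.1]
    rw [if_neg hw]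
    refine eq_zero_of_isHomogeneous_of_forall_rename_swap
      (isHomogeneous_cancellationSum hS.2.1 hS.2.1 w) (hn ▸ (lenS_pos hw).ne') fun i => ?_
    exact rename_swap_cancellationSum hS hw
      (fun x hx hx1 => by simpa [hx1] using ih _ (hn ▸ hx) x rfl) i
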